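/- arXiv:1207.0484 — 2 statements merged into one kernel-verified Lean document; each statement's English description precedes it below -/
import Mathlib

section
/- Let h, h_p be i.i.d. Exp(1) channel power gains, let P, Psi > 0, and set lambda = h * min(P, Psi / h_p). Then the CDF of lambda is F(x) = 1 - e^{-x/P} + (x/(Psi + x)) e^{-(x + Psi)/P} for x >= 0. -/
open MeasureTheory ProbabilityTheory Real Set
open scoped ENNReal


lemma expMeasure_Iic (y : ℝ) :
    expMeasure 1 (Iic y) = ENNReal.ofReal (if 0 ≤ y then 1 - Real.exp (-y) else 0) := by
  rw [expMeasure, gammaMeasure, withDensity_apply _ measurableSet_Iic]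
  have := lintegral_exponentialPDF_eq_antiDeriv (r := 1) one_pos y
  simp only [one_mul] at this
  exact this

lemma map_eq_expMeasure {Ω : Type*} [MeasurableSpace Ω] (μ : Measure Ω) [IsProbabilityMeasure μ]
    (h : Ω → ℝ) (hmeas : Measurable h)
    (hCDF : ∀ x : ℝ, 0 ≤ x → μ {ω | h ω ≤ x} = ENNReal.ofReal (1 - Real.exp (-x))) :
    μ.map h = expMeasure 1 := by
  haveI : IsFiniteMeasure (μ.map h) := Measure.isFiniteMeasure_map μ h
  refine Measure.ext_of_Iic _ _ (fun a => ?_)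
  rw [Measure.map_apply hmeas measurableSet_Iic, expMeasure_Iic]
  have hset : h ⁻¹' (Iic a) = {ω | h ω ≤ a} := rfl
  rw [hset]
  by_cases ha : 0 ≤ a
  · rw [if_pos ha]; exact hCDF a ha
  · rw [if_neg ha, ENNReal.ofReal_zero]
    have h0 : μ {ω | h ω ≤ 0} = 0 := by
      rw [hCDF 0 le_rfl]; simp
    have : μ {ω | h ω ≤ a} ≤ μ {ω | h ω ≤ 0} :=
      measure_mono (fun ω (hω : h ω ≤ a) => hω.trans (le_of_not_ge ha))
    exact le_antisymm (h0 ▸ this) (zero_le)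



lemma integrable_f (P Psi x : ℝ) (hP : 0 < P) (hPsi : 0 < Psi) (hx : 0 ≤ x) :
    IntegrableOn (fun b : ℝ => exp (-b) * (1 - exp (-(x / min P (Psi / b))))) (Ioi 0) := by
  have hmeas : Measurable (fun b : ℝ => exp (-b) * (1 - exp (-(x / min P (Psi / b))))) := by
    exact (measurable_id.neg.exp).mul
      ((measurable_const.sub ((measurable_const.div
        (measurable_const.min (measurable_const.div measurable_id))).neg.exp)))
  have hexp : IntegrableOn (fun b : ℝ => exp (-b)) (Ioi 0) := by
    simpa using exp_neg_integrableOn_Ioi 0 one_pos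
  refine hexp.mono' hmeas.aestronglyMeasurable ?_
  filter_upwards [ae_restrict_mem measurableSet_Ioi] with b hb
  have hbpos : (0:ℝ) < b := hb
  have hc : 0 < min P (Psi / b) := lt_min hP (div_pos hPsi hbpos)
  have h1 : 0 ≤ x / min P (Psi / b) := div_nonneg hx hc.le
  have h2 : exp (-(x / min P (Psi / b))) ≤ 1 := exp_le_one_iff.2 (by linarith)
  have h3 : 0 ≤ 1 - exp (-(x / min P (Psi / b))) := by linarith
  have h4 : 1 - exp (-(x / min P (Psi / b))) ≤ 1 := by
    have := exp_pos (-(x / min P (Psi / b))); linarith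
  rw [Real.norm_eq_abs, abs_mul, abs_of_nonneg (exp_pos _).le, abs_of_nonneg h3]
  calc exp (-b) * (1 - exp (-(x / min P (Psi / b)))) ≤ exp (-b) * 1 :=
        mul_le_mul_of_nonneg_left h4 (exp_pos _).le
    _ = exp (-b) := mul_one _

lemma key_integral (P Psi x : ℝ) (hP : 0 < P) (hPsi : 0 < Psi) (hx : 0 ≤ x) :
    ∫ b in Ioi (0:ℝ), exp (-b) * (1 - exp (-(x / min P (Psi / b))))
      = 1 - exp (-x / P) + x / (Psi + x) * exp (-(x + Psi) / P) := by
  set t := Psi / P with ht_def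
  have ht : 0 < t := div_pos hPsi hP
  set c := 1 + x / Psi with hc_def
  have hc : 0 < c := by positivity
  have hsplit : Ioc (0:ℝ) t ∪ Ioi t = Ioi 0 := Ioc_union_Ioi_eq_Ioi ht.le
  have hint := integrable_f P Psi x hP hPsi hx
  have hint1 : IntegrableOn (fun b : ℝ => exp (-b) * (1 - exp (-(x / min P (Psi / b)))))
      (Ioc 0 t) := hint.mono_set (fun b hb => hb.1)
  have hint2 : IntegrableOn (fun b : ℝ => exp (-b) * (1 - exp (-(x / min P (Psi / b)))))
      (Ioi t) := hint.mono_set (fun b hb => lt_trans ht hb)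
  rw [← hsplit, setIntegral_union (Ioc_disjoint_Ioi le_rfl) measurableSet_Ioi hint1 hint2]
  -- first piece
  have e1 : ∫ b in Ioc (0:ℝ) t, exp (-b) * (1 - exp (-(x / min P (Psi / b))))
      = (1 - exp (-x / P)) * (1 - exp (-t)) := by
    have hcong : ∀ b ∈ Ioc (0:ℝ) t, exp (-b) * (1 - exp (-(x / min P (Psi / b))))
        = (1 - exp (-x / P)) * exp (-b) := by
      intro b hb
      have hbpos : (0:ℝ) < b := hb.1
      have hmin : min P (Psi / b) = P := by
        apply min_eq_left
        rw [le_div_iff₀ hbpos]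
        calc P * b ≤ P * t := by nlinarith [hb.2]
          _ = Psi := by rw [ht_def]; field_simp
      rw [hmin, neg_div]
      ring
    rw [setIntegral_congr_fun measurableSet_Ioc hcong, integral_const_mul]
    congr 1
    rw [← intervalIntegral.integral_of_le ht.le]
    have h5 : ∫ b in (0:ℝ)..t, exp (-b) = ∫ b in (-t)..(-(0:ℝ)), exp b :=
      intervalIntegral.integral_comp_neg (a := (0:ℝ)) (b := t) (fun y => exp y)
    rw [h5]
    simp [integral_exp]
  -- second piece
  have e2 : ∫ b in Ioi t, exp (-b) * (1 - exp (-(x / min P (Psi / b))))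
      = exp (-t) - c⁻¹ * exp (-(c * t)) := by
    have hcong : ∀ b ∈ Ioi t, exp (-b) * (1 - exp (-(x / min P (Psi / b))))
        = exp (-b) - exp (-(c * b)) := by
      intro b hb
      have hbt : t < b := hb
      have hbpos : (0:ℝ) < b := lt_trans ht hbt
      have hmin : min P (Psi / b) = Psi / b := by
        apply min_eq_right
        rw [div_le_iff₀ hbpos]
        calc Psi = P * t := by rw [ht_def]; field_simp
          _ ≤ P * b := by nlinarith
      rw [hmin]
      have : x / (Psi / b) = x * b / Psi := by field_simp
      rw [this, mul_sub, mul_one, ← Real.exp_add]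
      congr 2
      rw [hc_def]; field_simp; ring
    rw [setIntegral_congr_fun measurableSet_Ioi hcong]
    have hi1 : IntegrableOn (fun b : ℝ => exp (-b)) (Ioi t) := by
      simpa using exp_neg_integrableOn_Ioi t one_pos
    have hi2 : IntegrableOn (fun b : ℝ => exp (-(c * b))) (Ioi t) := by
      simpa using exp_neg_integrableOn_Ioi t hc
    rw [integral_sub hi1 hi2, integral_exp_neg_Ioi]
    congr 1
    have := integral_comp_mul_left_Ioi (fun y => exp (-y)) t hc
    simp only [smul_eq_mul] at this
    rw [this, integral_exp_neg_Ioi]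
  rw [e1, e2]
  -- final algebra
  have hxP : exp (-x / P) * exp (-t) = exp (-(x + Psi) / P) := by
    rw [← Real.exp_add]
    congr 1
    rw [ht_def]; field_simp
    ring
  have hcinv : c⁻¹ = Psi / (Psi + x) := by
    rw [hc_def]
    field_simp
  have hct : c * t = (x + Psi) / P := by
    rw [hc_def, ht_def]
    field_simp
    ring
  have hxP' : exp (-x / P) * exp (-t) = exp (-((x + Psi) / P)) := by rw [hxP, neg_div]
  rw [hcinv, hct, ← hxP', ← hxP]
  have hPsix : Psi + x ≠ 0 := by positivity
  generalize exp (-x / P) = A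
  generalize exp (-t) = B
  field_simp
  ring

/-- CDF of the adapted received power `λ = h · min(P, Ψ/h_p)`, where `h, h_p` are
independent unit-mean exponential (Exp(1)) channel power gains, `P > 0` is the peak
transmit power and `Ψ > 0` the interference temperature:
`F_λ(x) = 1 - e^{-x/P} + (x/(Ψ+x)) e^{-(x+Ψ)/P}` for `x ≥ 0`. -/
theorem cdf_adapted_received_power
    {Ω : Type*} [MeasurableSpace Ω] (μ : Measure Ω) [IsProbabilityMeasure μ]
    (h hp : Ω → ℝ) (hmeas : Measurable h) (hpmeas : Measurable hp)
    (hCDF : ∀ x : ℝ, 0 ≤ x → μ {ω | h ω ≤ x} = ENNReal.ofReal (1 - Real.exp (-x)))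
    (hpCDF : ∀ x : ℝ, 0 ≤ x → μ {ω | hp ω ≤ x} = ENNReal.ofReal (1 - Real.exp (-x)))
    (hindep : IndepFun h hp μ)
    (P Psi : ℝ) (hP : 0 < P) (hPsi : 0 < Psi) :
    ∀ x : ℝ, 0 ≤ x →
      (μ {ω | h ω * min P (Psi / hp ω) ≤ x}).toReal
        = 1 - Real.exp (-x / P) + x / (Psi + x) * Real.exp (-(x + Psi) / P) := by
  intro x hx
  have hmapH : μ.map h = expMeasure 1 := map_eq_expMeasure μ h hmeas hCDF
  have hmapHp : μ.map hp = expMeasure 1 := map_eq_expMeasure μ hp hpmeas hpCDF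
  haveI : IsProbabilityMeasure (expMeasure 1) := isProbabilityMeasure_expMeasure one_pos
  have hprod : μ.map (fun ω => (hp ω, h ω)) = (expMeasure 1).prod (expMeasure 1) := by
    nth_rw 1 [← hmapHp]
    rw [← hmapH]
    exact (indepFun_iff_map_prod_eq_prod_map_map hpmeas.aemeasurable
      hmeas.aemeasurable).mp hindep.symm
  set S : Set (ℝ × ℝ) := {p : ℝ × ℝ | p.2 * min P (Psi / p.1) ≤ x} with hS_def
  have hSmeas : MeasurableSet S :=
    measurableSet_le (measurable_snd.mul
      (measurable_const.min (measurable_const.div measurable_fst))) measurable_const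
  have h1 : μ {ω | h ω * min P (Psi / hp ω) ≤ x} = ((expMeasure 1).prod (expMeasure 1)) S := by
    rw [← hprod, Measure.map_apply (hpmeas.prodMk hmeas) hSmeas]
    rfl
  rw [h1, Measure.prod_apply hSmeas]
  have hinner : ∀ b : ℝ, 0 < b →
      expMeasure 1 (Prod.mk b ⁻¹' S)
        = ENNReal.ofReal (1 - exp (-(x / min P (Psi / b)))) := by
    intro b hb
    have hc : 0 < min P (Psi / b) := lt_min hP (div_pos hPsi hb)
    have hpre : Prod.mk b ⁻¹' S = Iic (x / min P (Psi / b)) := by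
      ext a
      simp only [hS_def, mem_preimage, mem_setOf_eq, mem_Iic]
      exact (le_div_iff₀ hc).symm
    rw [hpre, expMeasure_Iic, if_pos (div_nonneg hx hc.le)]
  set F : ℝ → ℝ≥0∞ :=
    fun b => ENNReal.ofReal (exp (-b) * (1 - exp (-(x / min P (Psi / b))))) with hF_def
  have hdens : expMeasure 1 = volume.withDensity (exponentialPDF 1) := rfl
  have hstep : ∫⁻ b, expMeasure 1 (Prod.mk b ⁻¹' S) ∂(expMeasure 1)
      = ∫⁻ b in Ioi (0:ℝ), F b := by
    have hfm : Measurable (exponentialPDF 1) := (measurable_gammaPDFReal 1 1).ennreal_ofReal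
    have hflt : ∀ᵐ b ∂(volume : Measure ℝ), exponentialPDF 1 b < ⊤ :=
      ae_of_all _ fun b => by rw [exponentialPDF]; exact ENNReal.ofReal_lt_top
    rw [hdens, lintegral_withDensity_eq_lintegral_mul_non_measurable _ hfm hflt]
    have hne : ∀ᵐ (b : ℝ), b ≠ 0 := by
      refine ae_iff.mpr ?_
      have : {b : ℝ | ¬ b ≠ 0} = {0} := by ext b; simp
      rw [this, Real.volume_singleton]
    rw [← lintegral_indicator measurableSet_Ioi F]
    apply lintegral_congr_ae
    filter_upwards [hne] with b hb
    rcases lt_or_gt_of_ne hb with hneg | hpos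
    · rw [Pi.mul_apply, exponentialPDF_of_neg hneg, zero_mul,
        Set.indicator_of_notMem
        (show b ∉ Ioi (0:ℝ) from fun hmem => absurd hneg (not_lt.2 (le_of_lt hmem))) F]
    · rw [Pi.mul_apply, ← hdens, exponentialPDF_of_nonneg hpos.le, hinner b hpos,
        Set.indicator_of_mem (show b ∈ Ioi (0:ℝ) from hpos) F, hF_def]
      simp only [one_mul]
      rw [← ENNReal.ofReal_mul (exp_pos _).le]
  rw [hstep]
  have hnn : ∀ᵐ b ∂(volume.restrict (Ioi (0:ℝ))),
      0 ≤ exp (-b) * (1 - exp (-(x / min P (Psi / b)))) := by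
    filter_upwards [ae_restrict_mem measurableSet_Ioi] with b hb
    have hc : 0 < min P (Psi / b) := lt_min hP (div_pos hPsi hb)
    have h2 : exp (-(x / min P (Psi / b))) ≤ 1 :=
      exp_le_one_iff.2 (neg_nonpos.2 (div_nonneg hx hc.le))
    have := exp_pos (-b)
    nlinarith
  have hofreal : ∫⁻ b in Ioi (0:ℝ), F b
      = ENNReal.ofReal (∫ b in Ioi (0:ℝ), exp (-b) * (1 - exp (-(x / min P (Psi / b))))) := by
    rw [hF_def, ← ofReal_integral_eq_lintegral_ofReal (integrable_f P Psi x hP hPsi hx) hnn]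
  rw [hofreal, ENNReal.toReal_ofReal (integral_nonneg_of_ae hnn),
    key_integral P Psi x hP hPsi hx]
end

section
/- Let lambda have CDF F_lambda(x) = 1 - e^{-x/P} + (x/(Psi+x)) e^{-(x+Psi)/P} on [0, infinity), let I be exponential with mean P_n independent of lambda, and eta > 0. Then the CDF of S = lambda / (I + eta) is F_S(x) = 1 - (1 - e^{-Psi/P}) e^{-x eta / P} / (1 + x P_n / P) - (Psi/(x P_n)) e^{Psi/(x P_n) + eta/P_n} * Gamma(0, (eta + Psi/x)(1/P_n + x/P)) for x > 0, where Gamma(0, z) = integral from z to infinity of e^{-t}/t dt. -/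
open MeasureTheory ProbabilityTheory Real Set

/-!
Since `I ≥ 0` almost surely and `η > 0`, the event `λ / (I + η) ≤ x` is `λ ≤ x (I + η)`. By
independence its probability is `∫ F_λ(x (a + η)) dP_I(a)`, and `P_I` is the exponential law of
rate `1 / P_n`. Writing `1 - F_λ(t) = (1 - e^{-Ψ/P}) e^{-t/P} + Ψ e^{-(t+Ψ)/P} / (Ψ + t)` and
`Ψ + x (a + η) = x (a + η + Ψ/x)`, the integrand becomes a combination of two exponentials and
of `e^{-b (a + d)} / (a + d)` with `b = 1/P_n + x/P`, `d = η + Ψ/x`; the first two integrate in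
closed form and the last is `Γ(0, b d)` after the substitution `t = b (a + d)`.
-/

section ExponentialIntegrals

lemma integral_Ioi_comp_add_right {E : Type*} [NormedAddCommGroup E] [NormedSpace ℝ E]
    (f : ℝ → E) (a d : ℝ) :
    ∫ y in Ioi a, f (y + d) = ∫ t in Ioi (a + d), f t := by
  have h := (measurePreserving_add_right volume d).setIntegral_preimage_emb
    (measurableEmbedding_addRight d) f (Ioi (a + d))
  rwa [preimage_add_const_Ioi, add_sub_cancel_right] at h

lemma integral_exp_neg_mul_Ioi_zero {b : ℝ} (hb : 0 < b) :
    ∫ y in Ioi (0 : ℝ), exp (-(b * y)) = b⁻¹ := by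
  simpa only [mul_zero, integral_exp_neg_Ioi_zero, smul_eq_mul, mul_one] using
    integral_comp_mul_left_Ioi (fun s => exp (-s)) 0 hb

lemma integrableOn_exp_neg_mul_Ioi_zero {b : ℝ} (hb : 0 < b) :
    IntegrableOn (fun y => exp (-(b * y))) (Ioi 0) := by
  simpa only [neg_mul] using exp_neg_integrableOn_Ioi 0 hb

lemma integral_exp_neg_mul_add_div_Ioi_zero {b d : ℝ} (hb : 0 < b) (hd : 0 ≤ d) :
    ∫ y in Ioi (0 : ℝ), exp (-(b * (y + d))) / (y + d) = ∫ t in Ioi (b * d), exp (-t) / t := by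
  rw [integral_Ioi_comp_add_right (fun t => exp (-(b * t)) / t), zero_add]
  have hscale : ∀ t ∈ Ioi d, exp (-(b * t)) / t = b * (exp (-(b * t)) / (b * t)) := by
    intro t ht
    have : t ≠ 0 := (hd.trans_lt ht).ne'
    field_simp
  rw [setIntegral_congr_fun measurableSet_Ioi hscale, integral_const_mul,
    integral_comp_mul_left_Ioi (fun s => exp (-s) / s) d hb, smul_eq_mul,
    mul_inv_cancel_left₀ hb.ne']

lemma integrableOn_exp_neg_mul_add_div_Ioi_zero {b d : ℝ} (hb : 0 < b) (hd : 0 < d) :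
    IntegrableOn (fun y => exp (-(b * (y + d))) / (y + d)) (Ioi 0) := by
  refine ((integrableOn_exp_neg_mul_Ioi_zero hb).const_mul (exp (-(b * d)) / d)).mono'
    (by fun_prop : Measurable _).aestronglyMeasurable ?_
  filter_upwards [ae_restrict_mem measurableSet_Ioi] with y (hy : 0 < y)
  rw [norm_of_nonneg (by positivity), div_le_iff₀ (by positivity)]
  have hsplit : exp (-(b * (y + d))) = exp (-(b * d)) * exp (-(b * y)) := by
    rw [← exp_add]; ring_nf
  calc exp (-(b * (y + d))) = exp (-(b * d)) / d * exp (-(b * y)) * d := by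
        rw [hsplit]; field_simp
    _ ≤ exp (-(b * d)) / d * exp (-(b * y)) * (y + d) := by gcongr; linarith

end ExponentialIntegrals

section Probability

variable {Ω : Type*} [MeasurableSpace Ω] {μ : Measure Ω}

lemma measure_preimage_prod_eq_lintegral_of_indepFun [IsFiniteMeasure μ]
    {α β : Type*} [MeasurableSpace α] [MeasurableSpace β] {X : Ω → α} {Y : Ω → β}
    (hX : Measurable X) (hY : Measurable Y) (hXY : IndepFun X Y μ)
    {s : Set (α × β)} (hs : MeasurableSet s) :
    μ ((fun ω => (X ω, Y ω)) ⁻¹' s) = ∫⁻ a, μ.map Y (Prod.mk a ⁻¹' s) ∂μ.map X := by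
  rw [← Measure.map_apply (hX.prodMk hY) hs,
    (indepFun_iff_map_prod_eq_prod_map_map hX.aemeasurable hY.aemeasurable).1 hXY,
    Measure.prod_apply hs]

lemma map_eq_expMeasure_of_cdf [IsProbabilityMeasure μ] {X : Ω → ℝ} (hX : Measurable X)
    {m : ℝ} (hm : 0 < m)
    (hcdf : ∀ x, 0 ≤ x → μ {ω | X ω ≤ x} = ENNReal.ofReal (1 - exp (-x / m))) :
    μ.map X = expMeasure m⁻¹ := by
  have := Measure.isProbabilityMeasure_map (μ := μ) hX.aemeasurable
  refine Measure.ext_of_Iic _ _ fun x => ?_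
  rw [Measure.map_apply hX measurableSet_Iic, expMeasure, gammaMeasure,
    withDensity_apply _ measurableSet_Iic, show gammaPDF 1 m⁻¹ = exponentialPDF m⁻¹ from rfl,
    lintegral_exponentialPDF_eq_antiDeriv (inv_pos.2 hm)]
  split_ifs with hx
  · rw [show -(m⁻¹ * x) = -x / m by ring]
    exact hcdf x hx
  · have hnull : μ {ω | X ω ≤ 0} = 0 := by simpa using hcdf 0 le_rfl
    rw [ENNReal.ofReal_zero]
    exact measure_mono_null (fun ω (h : X ω ≤ x) => by
      show X ω ≤ 0; linarith [not_le.1 hx]) hnull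

lemma lintegral_expMeasure {r : ℝ} (f : ℝ → ENNReal) :
    ∫⁻ a, f a ∂expMeasure r = ∫⁻ a in Ioi 0, ENNReal.ofReal (r * exp (-(r * a))) * f a := by
  rw [expMeasure, gammaMeasure, lintegral_withDensity_eq_lintegral_mul_non_measurable _
      (show Measurable (gammaPDF 1 r) from (measurable_gammaPDFReal 1 r).ennreal_ofReal)
      (ae_of_all _ fun _ => ENNReal.ofReal_lt_top),
    ← lintegral_add_compl _ (measurableSet_Ici (a := 0)), compl_Ici,
    setLIntegral_congr_fun measurableSet_Iio (g := fun _ => 0) fun a ha => ?_,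
    lintegral_zero, add_zero, setLIntegral_congr Ioi_ae_eq_Ici.symm]
  · refine setLIntegral_congr_fun measurableSet_Ioi fun a (ha : 0 < a) => ?_
    rw [Pi.mul_apply, ← exponentialPDF_of_nonneg ha.le]
    rfl
  · simp [gammaPDF_of_neg (show a < 0 from ha)]

end Probability

section AdaptedPower

/-- `F_λ` in the paper's notation. -/
noncomputable def adaptedPowerCDF (P Ψ t : ℝ) : ℝ :=
  1 - exp (-t / P) + t / (Ψ + t) * exp (-(t + Ψ) / P)

variable {P Ψ : ℝ}

lemma adaptedPowerCDF_nonneg (hP : 0 ≤ P) (hΨ : 0 ≤ Ψ) {t : ℝ} (ht : 0 ≤ t) :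
    0 ≤ adaptedPowerCDF P Ψ t := by
  have hexp : exp (-t / P) ≤ 1 :=
    exp_le_one_iff.2 (div_nonpos_of_nonpos_of_nonneg (by linarith) hP)
  unfold adaptedPowerCDF
  have : 0 ≤ t / (Ψ + t) * exp (-(t + Ψ) / P) := by positivity
  linarith

lemma exp_mul_adaptedPowerCDF_eqOn {Pn η x b d : ℝ} (hP : P ≠ 0) (hPn : Pn ≠ 0) (hx : x ≠ 0)
    (hb : b = 1 / Pn + x / P) (hd : d = η + Ψ / x) :
    EqOn (fun a => Pn⁻¹ * exp (-(Pn⁻¹ * a)) * adaptedPowerCDF P Ψ (x * (a + η)))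
      (fun a => Pn⁻¹ * exp (-(Pn⁻¹ * a))
        - (1 - exp (-Ψ / P)) * Pn⁻¹ * exp (-x * η / P) * exp (-(b * a))
        - Ψ / (x * Pn) * exp (Ψ / (x * Pn) + η / Pn) * (exp (-(b * (a + d))) / (a + d)))
      {a | a + d ≠ 0} := by
  intro a (ha : a + d ≠ 0)
  have hnum : x * (a + η) = x * (a + d) - Ψ := by rw [hd]; field_simp; ring
  have hexp_a : exp (-(b * a)) = exp (-(x * a) / P) * exp (-(Pn⁻¹ * a)) := by
    rw [← exp_add, hb]; ring_nf
  have hexp_η : exp (-(x * (a + η)) / P) = exp (-(x * a) / P) * exp (-x * η / P) := by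
    rw [← exp_add]; ring_nf
  have hexp_ηΨ : exp (-(x * (a + η) + Ψ) / P)
      = exp (-(x * a) / P) * exp (-x * η / P) * exp (-Ψ / P) := by
    rw [← exp_add, ← exp_add]; ring_nf
  have hexp_ad : exp (Ψ / (x * Pn) + η / Pn) * exp (-(b * (a + d)))
      = exp (-(x * a) / P) * exp (-(Pn⁻¹ * a)) * exp (-x * η / P) * exp (-Ψ / P) := by
    simp only [← exp_add]
    congr 1
    rw [hb, hd]
    field_simp
    ring
  simp only [adaptedPowerCDF]
  rw [hexp_η, hexp_ηΨ, hnum, add_sub_cancel, hexp_a, mul_div_assoc', mul_assoc (Ψ / (x * Pn)),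
    hexp_ad]
  field_simp
  ring

variable {Pn η x : ℝ}

lemma integrableOn_exp_mul_adaptedPowerCDF (hP : 0 < P) (hPn : 0 < Pn) (hΨ : 0 ≤ Ψ)
    (hη : 0 < η) (hx : 0 < x) :
    IntegrableOn (fun a => Pn⁻¹ * exp (-(Pn⁻¹ * a)) * adaptedPowerCDF P Ψ (x * (a + η)))
      (Ioi 0) := by
  have hb : 0 < 1 / Pn + x / P := by positivity
  have hd : 0 < η + Ψ / x := by positivity
  refine IntegrableOn.congr_fun ?_ (exp_mul_adaptedPowerCDF_eqOn hP.ne' hPn.ne' hx.ne' rfl rfl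
    |>.mono fun a (ha : 0 < a) => (add_pos ha hd).ne').symm measurableSet_Ioi
  exact (((integrableOn_exp_neg_mul_Ioi_zero (inv_pos.2 hPn)).const_mul _).sub
    ((integrableOn_exp_neg_mul_Ioi_zero hb).const_mul _)).sub
    ((integrableOn_exp_neg_mul_add_div_Ioi_zero hb hd).const_mul _)

lemma integral_exp_mul_adaptedPowerCDF (hP : 0 < P) (hPn : 0 < Pn) (hΨ : 0 ≤ Ψ)
    (hη : 0 < η) (hx : 0 < x) :
    ∫ a in Ioi 0, Pn⁻¹ * exp (-(Pn⁻¹ * a)) * adaptedPowerCDF P Ψ (x * (a + η))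
      = 1 - (1 - exp (-Ψ / P)) * exp (-x * η / P) / (1 + x * Pn / P)
          - Ψ / (x * Pn) * exp (Ψ / (x * Pn) + η / Pn) *
            ∫ t in Ioi ((η + Ψ / x) * (1 / Pn + x / P)), exp (-t) / t := by
  have hb : 0 < 1 / Pn + x / P := by positivity
  have hd : 0 < η + Ψ / x := by positivity
  have i1 := (integrableOn_exp_neg_mul_Ioi_zero (inv_pos.2 hPn)).const_mul Pn⁻¹
  have i2 := (integrableOn_exp_neg_mul_Ioi_zero hb).const_mul
    ((1 - exp (-Ψ / P)) * Pn⁻¹ * exp (-x * η / P))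
  have i3 := (integrableOn_exp_neg_mul_add_div_Ioi_zero hb hd).const_mul
    (Ψ / (x * Pn) * exp (Ψ / (x * Pn) + η / Pn))
  rw [setIntegral_congr_fun measurableSet_Ioi
      (exp_mul_adaptedPowerCDF_eqOn hP.ne' hPn.ne' hx.ne' rfl rfl
        |>.mono fun a (ha : 0 < a) => (add_pos ha hd).ne'),
    integral_sub (by exact i1.sub i2) i3,
    integral_sub i1 i2, integral_const_mul, integral_const_mul, integral_const_mul,
    integral_exp_neg_mul_Ioi_zero (inv_pos.2 hPn), integral_exp_neg_mul_Ioi_zero hb,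
    integral_exp_neg_mul_add_div_Ioi_zero hb hd.le, mul_comm (1 / Pn + x / P)]
  field_simp

end AdaptedPower

theorem cdf_sinr_with_interference_general
    {Ω : Type*} [MeasurableSpace Ω] (μ : Measure Ω) [IsProbabilityMeasure μ]
    (lam I : Ω → ℝ) (hlmeas : Measurable lam) (hImeas : Measurable I)
    (P Pn Psi eta : ℝ) (hP : 0 < P) (hPn : 0 < Pn) (hPsi : 0 < Psi) (heta : 0 < eta)
    (hlamCDF : ∀ x : ℝ, 0 ≤ x →
      μ {ω | lam ω ≤ x} =
        ENNReal.ofReal (1 - Real.exp (-x / P) + x / (Psi + x) * Real.exp (-(x + Psi) / P)))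
    (hICDF : ∀ x : ℝ, 0 ≤ x →
      μ {ω | I ω ≤ x} = ENNReal.ofReal (1 - Real.exp (-x / Pn)))
    (hindep : IndepFun lam I μ) :
    ∀ x : ℝ, 0 < x →
      (μ {ω | lam ω / (I ω + eta) ≤ x}).toReal
        = 1 - (1 - Real.exp (-Psi / P)) * Real.exp (-x * eta / P) / (1 + x * Pn / P)
          - (Psi / (x * Pn)) * Real.exp (Psi / (x * Pn) + eta / Pn) *
            (∫ t in Set.Ioi ((eta + Psi / x) * (1 / Pn + x / P)), Real.exp (-t) / t) := by
  intro x hx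
  have hI_nonneg : ∀ᵐ ω ∂μ, 0 ≤ I ω :=
    ae_iff.2 <| measure_mono_null (fun ω (h : ¬0 ≤ I ω) => (not_le.1 h).le)
      (by simpa using hICDF 0 le_rfl : μ {ω | I ω ≤ 0} = 0)
  have hevent : {ω | lam ω / (I ω + eta) ≤ x}
      =ᵐ[μ] (fun ω => (I ω, lam ω)) ⁻¹' {p : ℝ × ℝ | p.2 ≤ x * (p.1 + eta)} :=
    Filter.eventuallyEq_set.2 <|
      hI_nonneg.mono fun ω hω => div_le_iff₀ (add_pos_of_nonneg_of_pos hω heta)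
  have hlam_cdf : ∀ a ∈ Ioi (0 : ℝ),
      ENNReal.ofReal (Pn⁻¹ * exp (-(Pn⁻¹ * a))) *
          μ.map lam (Prod.mk a ⁻¹' {p : ℝ × ℝ | p.2 ≤ x * (p.1 + eta)})
        = ENNReal.ofReal (Pn⁻¹ * exp (-(Pn⁻¹ * a)) * adaptedPowerCDF P Psi (x * (a + eta))) := by
    intro a (ha : 0 < a)
    rw [show Prod.mk a ⁻¹' _ = Iic (x * (a + eta)) from rfl,
      Measure.map_apply hlmeas measurableSet_Iic,
      ENNReal.ofReal_mul (p := Pn⁻¹ * exp (-(Pn⁻¹ * a))) (by positivity)]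
    exact congrArg (_ * ·) (hlamCDF (x * (a + eta)) (by positivity))
  have hnonneg : ∀ a ∈ Ioi (0 : ℝ),
      0 ≤ Pn⁻¹ * exp (-(Pn⁻¹ * a)) * adaptedPowerCDF P Psi (x * (a + eta)) :=
    fun a (ha : 0 < a) => mul_nonneg (by positivity)
      (adaptedPowerCDF_nonneg hP.le hPsi.le (by positivity))
  rw [measure_congr hevent, measure_preimage_prod_eq_lintegral_of_indepFun hImeas hlmeas
      hindep.symm (measurableSet_le measurable_snd (by fun_prop)),
    map_eq_expMeasure_of_cdf hImeas hPn hICDF, lintegral_expMeasure,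
    setLIntegral_congr_fun measurableSet_Ioi hlam_cdf,
    ← ofReal_integral_eq_lintegral_ofReal
      (integrableOn_exp_mul_adaptedPowerCDF hP hPn hPsi.le heta hx)
      ((ae_restrict_iff' measurableSet_Ioi).2 (ae_of_all _ hnonneg)),
    ENNReal.toReal_ofReal (setIntegral_nonneg measurableSet_Ioi hnonneg)]
  exact integral_exp_mul_adaptedPowerCDF hP hPn hPsi.le heta hx

/-- CDF of the received SINR `S = λ/(I + η)`: here `λ` has the CDF
`F_λ(x) = 1 - e^{-x/P} + (x/(Ψ+x)) e^{-(x+Ψ)/P}` on `[0,∞)`, `I` is exponential with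
mean `Pn` independent of `λ`, and `η > 0` is the noise power.  For `x > 0`,
`F_S(x) = 1 - (1 - e^{-Ψ/P}) e^{-xη/P}/(1 + x Pn/P)
        - (Ψ/(x Pn)) e^{Ψ/(x Pn) + η/Pn} Γ(0, (η + Ψ/x)(1/Pn + x/P))`,
where `Γ(0,z) = ∫_z^∞ e^{-t}/t dt`. -/
theorem cdf_sinr_with_interference
    {Ω : Type*} [MeasurableSpace Ω] (μ : Measure Ω) [IsProbabilityMeasure μ]
    (lam I : Ω → ℝ) (hlmeas : Measurable lam) (hImeas : Measurable I)
    (P Pn Psi eta : ℝ) (hP : 0 < P) (hPn : 0 < Pn) (hPsi : 0 < Psi) (heta : 0 < eta)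
    (hlamCDF : ∀ x : ℝ, 0 ≤ x →
      μ {ω | lam ω ≤ x} =
        ENNReal.ofReal (1 - Real.exp (-x / P) + x / (Psi + x) * Real.exp (-(x + Psi) / P)))
    (hlamNonneg : ∀ᵐ ω ∂μ, 0 ≤ lam ω)
    (hICDF : ∀ x : ℝ, 0 ≤ x →
      μ {ω | I ω ≤ x} = ENNReal.ofReal (1 - Real.exp (-x / Pn)))
    (hindep : IndepFun lam I μ) :
    ∀ x : ℝ, 0 < x →
      (μ {ω | lam ω / (I ω + eta) ≤ x}).toReal
        = 1 - (1 - Real.exp (-Psi / P)) * Real.exp (-x * eta / P) / (1 + x * Pn / P)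
          - (Psi / (x * Pn)) * Real.exp (Psi / (x * Pn) + eta / Pn) *
            (∫ t in Set.Ioi ((eta + Psi / x) * (1 / Pn + x / P)), Real.exp (-t) / t) :=
  cdf_sinr_with_interference_general μ lam I hlmeas hImeas P Pn Psi eta hP hPn hPsi heta hlamCDF
    hICDF hindep
end
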